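/- Let k ≥ 1, let R = ℂ[x,y]/(x^k), and let 0 = i_0 ≤ i_1 ≤ … ≤ i_{k−1} be natural numbers. Let M̄, N̄ : R^k → R^k be the R-linear maps given by the k×k matrices over R with M̄_{p,q} = x^{k−1−(q−p)} y^{i_{q−1} − i_{p−1}} for p ≤ q and 0 for p > q, and N̄_{p,p} = x, N̄_{p,p+1} = −y^{i_p − i_{p−1}}, all other entries 0. Then the kernel of N̄ equals the range of M̄. -/
import Mathlib


open MvPolynomial Matrix

/-- The ring `R = ℂ[x,y]/(x^k)`. -/
abbrev Rquot (k : ℕ) :=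
  MvPolynomial (Fin 2) ℂ ⧸ Ideal.span {(X 0 : MvPolynomial (Fin 2) ℂ) ^ k}

/-- The image `x̄` of `x` in `R = ℂ[x,y]/(x^k)`. -/
noncomputable def xbar (k : ℕ) : Rquot k :=
  Ideal.Quotient.mk (Ideal.span {(X 0 : MvPolynomial (Fin 2) ℂ) ^ k}) (X 0)

/-- The image `ȳ` of `y` in `R = ℂ[x,y]/(x^k)`. -/
noncomputable def ybar (k : ℕ) : Rquot k :=
  Ideal.Quotient.mk (Ideal.span {(X 0 : MvPolynomial (Fin 2) ℂ) ^ k}) (X 1)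

/-- A polynomial lift of the matrix `M̄`. -/
noncomputable def Mzero (k : ℕ) (c : ℕ → ℕ) :
    Matrix (Fin k) (Fin k) (MvPolynomial (Fin 2) ℂ) :=
  Matrix.of fun p q =>
    if (p : ℕ) ≤ (q : ℕ) then
      X 0 ^ (k - 1 - ((q : ℕ) - (p : ℕ))) * X 1 ^ (c q - c p)
    else 0

/-- A polynomial lift of the matrix `N̄`. -/
noncomputable def Nzero (k : ℕ) (c : ℕ → ℕ) :
    Matrix (Fin k) (Fin k) (MvPolynomial (Fin 2) ℂ) :=
  Matrix.of fun p q =>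
    if (q : ℕ) = (p : ℕ) then X 0
    else if (q : ℕ) = (p : ℕ) + 1 then -(X 1 ^ (c q - c p))
    else 0

lemma Mzero_apply (k : ℕ) (c : ℕ → ℕ) (p q : Fin k) :
    Mzero k c p q =
      if (p : ℕ) ≤ (q : ℕ) then
        X 0 ^ (k - 1 - ((q : ℕ) - (p : ℕ))) * X 1 ^ (c q - c p)
      else 0 := rfl

lemma Nzero_apply (k : ℕ) (c : ℕ → ℕ) (p q : Fin k) :
    Nzero k c p q =
      if (q : ℕ) = (p : ℕ) then X 0
      else if (q : ℕ) = (p : ℕ) + 1 then -(X 1 ^ (c q - c p))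
      else 0 := rfl

lemma Mzero_mul_Nzero (k : ℕ) (c : ℕ → ℕ)
    (hmono : ∀ a b : ℕ, a ≤ b → b ≤ k - 1 → c a ≤ c b) :
    Mzero k c * Nzero k c = (X 0 : MvPolynomial (Fin 2) ℂ) ^ k • 1 := by
  funext p q
  have hkpos : 0 < k := p.pos
  have hqlt : (q : ℕ) < k := q.isLt
  have hplt : (p : ℕ) < k := p.isLt
  rw [Matrix.mul_apply, Matrix.smul_apply, Matrix.one_apply]
  by_cases hq : (q : ℕ) = 0
  · have hsum : ∀ r : Fin k, Mzero k c p r * Nzero k c r q =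
        if q = r then Mzero k c p q * X 0 else 0 := by
      intro r
      by_cases hr : q = r
      · subst hr
        rw [if_pos rfl, Nzero_apply, if_pos rfl]
      · have h1 : (q : ℕ) ≠ (r : ℕ) := fun h => hr (Fin.ext h)
        have h2 : (q : ℕ) ≠ (r : ℕ) + 1 := by omega
        rw [if_neg hr, Nzero_apply, if_neg h1, if_neg h2, mul_zero]
    rw [Finset.sum_congr rfl fun r _ => hsum r, Finset.sum_ite_eq, if_pos (Finset.mem_univ q)]
    by_cases hpq : p = q
    · subst hpq
      rw [if_pos rfl, Mzero_apply, if_pos le_rfl, Nat.sub_self, Nat.sub_zero, Nat.sub_self,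
        pow_zero, mul_one, smul_eq_mul, mul_one, ← pow_succ]
      congr 1
      omega
    · have hple : ¬ ((p : ℕ) ≤ (q : ℕ)) := by
        intro h
        exact hpq (Fin.ext (by omega))
      rw [if_neg hpq, Mzero_apply, if_neg hple, zero_mul, smul_zero]
  · obtain ⟨q', hq'v⟩ : ∃ q' : Fin k, (q' : ℕ) = (q : ℕ) - 1 := ⟨⟨(q : ℕ) - 1, by omega⟩, rfl⟩
    have hqq' : q ≠ q' := by
      intro h
      have := congrArg Fin.val h
      omega
    have hsum : ∀ r : Fin k, Mzero k c p r * Nzero k c r q =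
        (if q = r then Mzero k c p q * X 0 else 0) +
        (if q' = r then Mzero k c p q' * (-(X 1 ^ (c q - c q'))) else 0) := by
      intro r
      by_cases h1 : (q : ℕ) = (r : ℕ)
      · have hr : q = r := Fin.ext h1
        subst hr
        rw [if_pos rfl, if_neg hqq'.symm, add_zero, Nzero_apply, if_pos rfl]
      · by_cases h2 : (q : ℕ) = (r : ℕ) + 1
        · have hr : q' = r := Fin.ext (by omega)
          subst hr
          rw [if_neg (fun h => h1 (congrArg Fin.val h)), if_pos rfl, zero_add,
            Nzero_apply, if_neg h1, if_pos h2]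
        · have hr1 : q ≠ r := fun h => h1 (congrArg Fin.val h)
          have hr2 : q' ≠ r := by
            intro h
            have := congrArg Fin.val h
            omega
          rw [if_neg hr1, if_neg hr2, add_zero, Nzero_apply, if_neg h1, if_neg h2, mul_zero]
    rw [Finset.sum_congr rfl fun r _ => hsum r, Finset.sum_add_distrib,
      Finset.sum_ite_eq, Finset.sum_ite_eq, if_pos (Finset.mem_univ q),
      if_pos (Finset.mem_univ q')]
    rcases lt_trichotomy ((p : ℕ)) ((q : ℕ)) with hlt | heq | hgt
    · have hpq : p ≠ q := fun h => by
        rw [h] at hlt; exact lt_irrefl _ hlt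
      have hple : (p : ℕ) ≤ (q : ℕ) := le_of_lt hlt
      have hple' : (p : ℕ) ≤ (q' : ℕ) := by omega
      rw [if_neg hpq, smul_zero, Mzero_apply, Mzero_apply, if_pos hple, if_pos hple']
      have ha : k - 1 - ((q' : ℕ) - (p : ℕ)) = (k - 1 - ((q : ℕ) - (p : ℕ))) + 1 := by
        omega
      have hb : c q - c p = (c q' - c p) + (c q - c q') := by
        have h1 := hmono (p : ℕ) (q' : ℕ) hple' (by omega)
        have h2 := hmono (q' : ℕ) (q : ℕ) (by omega) (by omega)
        omega
      rw [ha, hb, pow_add, pow_add]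
      ring
    · have hpq : p = q := Fin.ext heq
      subst hpq
      have hple' : ¬ ((p : ℕ) ≤ (q' : ℕ)) := by omega
      rw [if_pos rfl, smul_eq_mul, mul_one, Mzero_apply, Mzero_apply, if_pos le_rfl,
        if_neg hple', zero_mul, add_zero, Nat.sub_self, Nat.sub_zero, Nat.sub_self,
        pow_zero, mul_one, ← pow_succ]
      congr 1
      omega
    · have hpq : p ≠ q := by
        intro h
        rw [h] at hgt
        exact lt_irrefl _ hgt
      have h1 : ¬ ((p : ℕ) ≤ (q : ℕ)) := by omega
      have h2 : ¬ ((p : ℕ) ≤ (q' : ℕ)) := by omega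
      rw [if_neg hpq, smul_zero, Mzero_apply, Mzero_apply, if_neg h1, if_neg h2,
        zero_mul, zero_mul, add_zero]

lemma Nzero_mul_Mzero (k : ℕ) (c : ℕ → ℕ)
    (hmono : ∀ a b : ℕ, a ≤ b → b ≤ k - 1 → c a ≤ c b) :
    Nzero k c * Mzero k c = (X 0 : MvPolynomial (Fin 2) ℂ) ^ k • 1 := by
  funext p q
  have hkpos : 0 < k := p.pos
  have hqlt : (q : ℕ) < k := q.isLt
  have hplt : (p : ℕ) < k := p.isLt
  rw [Matrix.mul_apply, Matrix.smul_apply, Matrix.one_apply]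
  by_cases hp : (p : ℕ) + 1 = k
  · have hsum : ∀ r : Fin k, Nzero k c p r * Mzero k c r q =
        if p = r then X 0 * Mzero k c p q else 0 := by
      intro r
      by_cases hr : p = r
      · subst hr
        rw [if_pos rfl, Nzero_apply, if_pos rfl]
      · have h1 : (r : ℕ) ≠ (p : ℕ) := fun h => hr (Fin.ext h.symm)
        have h2 : (r : ℕ) ≠ (p : ℕ) + 1 := by have := r.isLt; omega
        rw [if_neg hr, Nzero_apply, if_neg h1, if_neg h2, zero_mul]
    rw [Finset.sum_congr rfl fun r _ => hsum r, Finset.sum_ite_eq, if_pos (Finset.mem_univ p)]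
    by_cases hpq : p = q
    · subst hpq
      rw [if_pos rfl, Mzero_apply, if_pos le_rfl, Nat.sub_self, Nat.sub_zero, Nat.sub_self,
        pow_zero, mul_one, smul_eq_mul, mul_one, ← pow_succ']
      congr 1
      omega
    · have hple : ¬ ((p : ℕ) ≤ (q : ℕ)) := by
        intro h
        exact hpq (Fin.ext (by omega))
      rw [if_neg hpq, Mzero_apply, if_neg hple, mul_zero, smul_zero]
  · obtain ⟨p', hp'v⟩ : ∃ p' : Fin k, (p' : ℕ) = (p : ℕ) + 1 := ⟨⟨(p : ℕ) + 1, by omega⟩, rfl⟩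
    have hpp' : p ≠ p' := by
      intro h
      have := congrArg Fin.val h
      omega
    have hsum : ∀ r : Fin k, Nzero k c p r * Mzero k c r q =
        (if p = r then X 0 * Mzero k c p q else 0) +
        (if p' = r then (-(X 1 ^ (c p' - c p))) * Mzero k c p' q else 0) := by
      intro r
      by_cases h1 : (r : ℕ) = (p : ℕ)
      · have hr : p = r := Fin.ext h1.symm
        subst hr
        rw [if_pos rfl, if_neg hpp'.symm, add_zero, Nzero_apply, if_pos rfl]
      · by_cases h2 : (r : ℕ) = (p : ℕ) + 1
        · have hr : p' = r := Fin.ext (by omega)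
          subst hr
          rw [if_neg hpp', if_pos rfl, zero_add, Nzero_apply, if_neg h1, if_pos h2]
        · have hr1 : p ≠ r := fun h => h1 ((congrArg Fin.val h).symm)
          have hr2 : p' ≠ r := by
            intro h
            have := congrArg Fin.val h
            omega
          rw [if_neg hr1, if_neg hr2, add_zero, Nzero_apply, if_neg h1, if_neg h2, zero_mul]
    rw [Finset.sum_congr rfl fun r _ => hsum r, Finset.sum_add_distrib,
      Finset.sum_ite_eq, Finset.sum_ite_eq, if_pos (Finset.mem_univ p),
      if_pos (Finset.mem_univ p')]
    rcases lt_trichotomy ((p : ℕ)) ((q : ℕ)) with hlt | heq | hgt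
    · have hpq : p ≠ q := fun h => by
        rw [h] at hlt; exact lt_irrefl _ hlt
      have hple : (p : ℕ) ≤ (q : ℕ) := le_of_lt hlt
      have hple' : (p' : ℕ) ≤ (q : ℕ) := by omega
      rw [if_neg hpq, smul_zero, Mzero_apply, Mzero_apply, if_pos hple, if_pos hple']
      have ha : k - 1 - ((q : ℕ) - (p' : ℕ)) = (k - 1 - ((q : ℕ) - (p : ℕ))) + 1 := by
        omega
      have hb : c q - c p = (c p' - c p) + (c q - c p') := by
        have h1 := hmono (p : ℕ) (p' : ℕ) (by omega) (by omega)
        have h2 := hmono (p' : ℕ) (q : ℕ) hple' (by omega)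
        omega
      rw [ha, hb, pow_add, pow_add]
      ring
    · have hpq : p = q := Fin.ext heq
      subst hpq
      have hple' : ¬ ((p' : ℕ) ≤ (p : ℕ)) := by omega
      rw [if_pos rfl, smul_eq_mul, mul_one, Mzero_apply, Mzero_apply, if_pos le_rfl,
        if_neg hple', mul_zero, add_zero, Nat.sub_self, Nat.sub_zero, Nat.sub_self,
        pow_zero, mul_one, ← pow_succ']
      congr 1
      omega
    · have hpq : p ≠ q := by
        intro h
        rw [h] at hgt
        exact lt_irrefl _ hgt
      have h1 : ¬ ((p : ℕ) ≤ (q : ℕ)) := by omega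
      have h2 : ¬ ((p' : ℕ) ≤ (q : ℕ)) := by omega
      rw [if_neg hpq, smul_zero, Mzero_apply, Mzero_apply, if_neg h1, if_neg h2,
        mul_zero, mul_zero, add_zero]

/-- Let `k ≥ 1`, `R = ℂ[x,y]/(x^k)`, and `0 = i_0 ≤ i_1 ≤ … ≤ i_{k−1}`
(recorded via `c : ℕ → ℕ`, `c 0 = 0`, weakly increasing on `{0,…,k−1}`).  Let
`M̄, N̄ : R^k → R^k` be given by the matrices (`0`-based indices) with
`M̄ p q = x^(k−1−(q−p)) y^(c q − c p)` for `p ≤ q`, `0` otherwise, and `N̄ p p = x`,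
`N̄ p (p+1) = −y^(c (p+1) − c p)`, `0` otherwise.  Then `ker N̄ = range M̄`. -/
theorem presentation_exact_in_middle (k : ℕ) (hk : 1 ≤ k) (c : ℕ → ℕ) (hc0 : c 0 = 0)
    (hmono : ∀ a b : ℕ, a ≤ b → b ≤ k - 1 → c a ≤ c b)
    (Mmat Nmat : Matrix (Fin k) (Fin k) (Rquot k))
    (hM : ∀ p q : Fin k, Mmat p q =
      if (p : ℕ) ≤ (q : ℕ) then
        xbar k ^ (k - 1 - ((q : ℕ) - (p : ℕ))) * ybar k ^ (c q - c p)
      else 0)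
    (hN : ∀ p q : Fin k, Nmat p q =
      if (q : ℕ) = (p : ℕ) then xbar k
      else if (q : ℕ) = (p : ℕ) + 1 then -(ybar k ^ (c q - c p))
      else 0) :
    LinearMap.ker Nmat.mulVecLin = LinearMap.range Mmat.mulVecLin := by
  set I : Ideal (MvPolynomial (Fin 2) ℂ) :=
    Ideal.span {(X 0 : MvPolynomial (Fin 2) ℂ) ^ k} with hI
  set π : MvPolynomial (Fin 2) ℂ →+* Rquot k := Ideal.Quotient.mk I with hπ
  have hMmap : ∀ p q : Fin k, Mmat p q = π (Mzero k c p q) := by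
    intro p q
    rw [hM, Mzero_apply]
    simp only [apply_ite π, _root_.map_mul, map_pow, map_zero]
    rfl
  have hNmap : ∀ p q : Fin k, Nmat p q = π (Nzero k c p q) := by
    intro p q
    rw [hN, Nzero_apply]
    simp only [apply_ite π, map_neg, map_pow, map_zero]
    rfl
  have hMM : Mmat = (Mzero k c).map π := by
    ext p q; rw [hMmap]; rfl
  have hNN : Nmat = (Nzero k c).map π := by
    ext p q; rw [hNmap]; rfl
  have hxk : π ((X 0 : MvPolynomial (Fin 2) ℂ) ^ k) = 0 := by
    rw [hπ, Ideal.Quotient.eq_zero_iff_mem]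
    exact Ideal.mem_span_singleton_self _
  have hNMzero : Nmat * Mmat = 0 := by
    have h := Nzero_mul_Mzero k c hmono
    funext p q
    have hentry : (Nmat * Mmat) p q = π ((Nzero k c * Mzero k c) p q) := by
      rw [Matrix.mul_apply, Matrix.mul_apply, map_sum]
      exact Finset.sum_congr rfl fun r _ => by rw [hNmap, hMmap, _root_.map_mul]
    rw [hentry, h, Matrix.smul_apply, Matrix.one_apply, smul_eq_mul, _root_.map_mul, hxk, zero_mul]
    rfl
  apply le_antisymm
  · -- ker ⊆ range
    intro v hv
    rw [LinearMap.mem_ker, Matrix.mulVecLin_apply] at hv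
    choose vt hvt using fun p => Ideal.Quotient.mk_surjective (I := I) (v p)
    have hker : ∀ p : Fin k, ((Nzero k c) *ᵥ vt) p ∈ I := by
      intro p
      rw [← Ideal.Quotient.eq_zero_iff_mem]
      have heq : π (((Nzero k c) *ᵥ vt) p) = (Nmat *ᵥ v) p := by
        rw [RingHom.map_mulVec, ← hNN]
        congr 1
        funext r
        exact hvt r
      show π ((Nzero k c *ᵥ vt) p) = 0
      rw [heq, hv]
      rfl
    choose w hw using fun p => Ideal.mem_span_singleton'.mp (hker p)
    have hxne : ((X 0 : MvPolynomial (Fin 2) ℂ) ^ k) ≠ 0 :=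
      pow_ne_zero k (MvPolynomial.X_ne_zero 0)
    have hkey : (X 0 : MvPolynomial (Fin 2) ℂ) ^ k • ((Mzero k c) *ᵥ w) =
        (X 0 : MvPolynomial (Fin 2) ℂ) ^ k • vt := by
      calc (X 0 : MvPolynomial (Fin 2) ℂ) ^ k • ((Mzero k c) *ᵥ w)
          = (Mzero k c) *ᵥ ((X 0 : MvPolynomial (Fin 2) ℂ) ^ k • w) :=
            (Matrix.mulVec_smul _ _ _).symm
        _ = (Mzero k c) *ᵥ ((Nzero k c) *ᵥ vt) := by
            have harg : (X 0 : MvPolynomial (Fin 2) ℂ) ^ k • w = (Nzero k c) *ᵥ vt := by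
              funext r
              rw [Pi.smul_apply, smul_eq_mul, mul_comm]
              exact hw r
            rw [harg]
        _ = (Mzero k c * Nzero k c) *ᵥ vt := Matrix.mulVec_mulVec vt _ _
        _ = ((X 0 : MvPolynomial (Fin 2) ℂ) ^ k • (1 : Matrix (Fin k) (Fin k) _)) *ᵥ vt := by
            rw [Mzero_mul_Nzero k c hmono]
        _ = (X 0 : MvPolynomial (Fin 2) ℂ) ^ k • ((1 : Matrix (Fin k) (Fin k) _) *ᵥ vt) :=
            Matrix.smul_mulVec _ _ _
        _ = (X 0 : MvPolynomial (Fin 2) ℂ) ^ k • vt := by rw [Matrix.one_mulVec]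
    have hMw : (Mzero k c) *ᵥ w = vt := by
      funext p
      have h := congrFun hkey p
      simp only [Pi.smul_apply, smul_eq_mul] at h
      exact mul_left_cancel₀ hxne h
    refine ⟨fun p => π (w p), ?_⟩
    rw [Matrix.mulVecLin_apply]
    funext p
    have h1 : π (((Mzero k c) *ᵥ w) p) = Matrix.mulVec Mmat (fun r => π (w r)) p := by
      rw [RingHom.map_mulVec, ← hMM]
      rfl
    rw [← h1, hMw]
    exact hvt p
  · -- range ⊆ ker
    rintro v ⟨u, rfl⟩
    rw [LinearMap.mem_ker, Matrix.mulVecLin_apply, Matrix.mulVecLin_apply,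
      Matrix.mulVec_mulVec, hNMzero, Matrix.zero_mulVec]
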